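/- arXiv:1111.3109 — 3 statements merged into one kernel-verified Lean document; each statement's English description precedes it below -/
import Mathlib

section
/- For any abstract program A in standard form, configuration σ compatible with A, and program counter h ∈ [1..n], either cp_{j+}(A, σ, h) or cp_{j∞}(A, σ, h) holds (evaluation of abstract programs is total, in the sense that every computation either converges or diverges). -/
/-- A Jump-only (abstract) URM program: a list of triples `(i, j, k)` representing `J(i,j,k)`.
Instructions are 1-indexed. -/
abbrev AProg := List (ℕ × ℕ × ℕ)

/-- A finite list-configuration; register `i` (1-indexed) holds `areg σ i`. -/
abbrev FCfg := List ℕ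

/-- Content of register `i` (1-indexed) in a finite configuration. -/
def areg (σ : FCfg) (i : ℕ) : ℕ := σ.getD (i - 1) 0

/-- Inductive convergence predicate `cp_{j+}` for abstract (Jump-only) programs. -/
inductive cpjPlus (A : AProg) (σ : FCfg) : ℕ → Prop where
  | f_l {h i j k} : A[h-1]? = some (i, j, k) → h = A.length →
      areg σ i ≠ areg σ j → cpjPlus A σ h
  | t_l {h i j k} : A[h-1]? = some (i, j, k) → k = 0 →
      areg σ i = areg σ j → cpjPlus A σ h
  | f_r {h i j k} : A[h-1]? = some (i, j, k) → h < A.length →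
      areg σ i ≠ areg σ j → cpjPlus A σ (h+1) → cpjPlus A σ h
  | t_r {h i j k} : A[h-1]? = some (i, j, k) → k ≠ 0 →
      areg σ i = areg σ j → cpjPlus A σ k → cpjPlus A σ h

/-- One unfolding of the coinductive divergence rules `(f·r)_∞`, `(t·r)_∞`. -/
def cpjInfStep (A : AProg) (σ : FCfg) (R : ℕ → Prop) (h : ℕ) : Prop :=
  ∃ i j k, A[h-1]? = some (i, j, k) ∧
    ((h < A.length ∧ areg σ i ≠ areg σ j ∧ R (h+1)) ∨
     (k ≠ 0 ∧ areg σ i = areg σ j ∧ R k))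

/-- Coinductive divergence predicate `cp_{j∞}`, as a greatest fixpoint:
some post-fixed point of the rules holds. -/
def cpjInf (A : AProg) (σ : FCfg) (h : ℕ) : Prop :=
  ∃ R : ℕ → Prop, R h ∧ ∀ h', R h' → cpjInfStep A σ R h'

/-- A Jump-only program is in standard form if every jump target `k` satisfies `k ≤ n`. -/
def AStandardForm (A : AProg) : Prop := ∀ t ∈ A, t.2.2 ≤ A.length

/-- Compatibility of a finite configuration with an abstract program:
standard form, and all register indices lie in `[1..m]`. -/
def ACompatible (σ : FCfg) (A : AProg) : Prop :=
  AStandardForm A ∧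
    ∀ t ∈ A, 1 ≤ t.1 ∧ t.1 ≤ σ.length ∧ 1 ≤ t.2.1 ∧ t.2.1 ≤ σ.length

/-- for any abstract program `A` in standard form, configuration `σ`
compatible with `A`, and program counter `h ∈ [1..n]`, either `cp_{j+}(A,σ,h)` or
`cp_{j∞}(A,σ,h)` holds: evaluation of abstract programs is total. -/
theorem cpj_total (A : AProg) (σ : FCfg) (h : ℕ)
    (hsf : AStandardForm A) (hcomp : ACompatible σ A)
    (h1 : 1 ≤ h) (h2 : h ≤ A.length) :
    cpjPlus A σ h ∨ cpjInf A σ h := by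
  by_cases hp : cpjPlus A σ h
  · exact Or.inl hp
  · refine Or.inr ⟨fun h' => 1 ≤ h' ∧ h' ≤ A.length ∧ ¬ cpjPlus A σ h', ⟨h1, h2, hp⟩, ?_⟩
    rintro h' ⟨hh1, hh2, hnp⟩
    have hlt : h' - 1 < A.length := by omega
    obtain ⟨⟨i, j, k⟩, hget⟩ : ∃ t, A[h'-1]? = some t := ⟨A[h'-1], List.getElem?_eq_getElem hlt⟩
    have hmem : (i, j, k) ∈ A := by
      have := List.getElem?_eq_some_iff.mp hget
      exact this.2 ▸ List.getElem_mem _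
    refine ⟨i, j, k, hget, ?_⟩
    by_cases heq : areg σ i = areg σ j
    · have hk0 : k ≠ 0 := fun hk => hnp (cpjPlus.t_l hget hk heq)
      have hkle : k ≤ A.length := hsf _ hmem
      have hk1 : 1 ≤ k := Nat.one_le_iff_ne_zero.mpr hk0
      exact Or.inr ⟨hk0, heq, hk1, hkle, fun hpk => hnp (cpjPlus.t_r hget hk0 heq hpk)⟩
    · have hne : h' ≠ A.length := fun hE => hnp (cpjPlus.f_l hget hE heq)
      have hltn : h' < A.length := lt_of_le_of_ne hh2 hne
      exact Or.inl ⟨hltn, heq, by omega, hltn, fun hps => hnp (cpjPlus.f_r hget hltn heq hps)⟩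
end

section
/- If cp_+(U, σ, h, τ) holds for finite configurations, σ is compatible with U, σ is included in the infinite configuration σ∞, and τ is included in τ∞, then cp_+(U, σ∞, h, τ∞) holds for infinite configurations. -/
/-- URM instructions: Zero, Successor, Transfer, Jump (register indices are 1-indexed). -/
inductive Inst : Type
  | Z : ℕ → Inst
  | S : ℕ → Inst
  | T : ℕ → ℕ → Inst
  | J : ℕ → ℕ → ℕ → Inst

/-- A URM program is a finite sequence of instructions (1-indexed). -/
abbrev Pgm := List Inst

/-- An infinite stream-configuration. -/
abbrev Cfg := Stream' ℕ

/-- The `h`-th instruction of `U` (1-indexed). -/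
def inst (U : Pgm) (h : ℕ) : Option Inst := U[h-1]?

/-- Content of register `i` (1-indexed) in an infinite configuration. -/
def reg (σ : Cfg) (i : ℕ) : ℕ := σ.get (i - 1)

/-- Corecursive write of value `v` into register `i` (1-indexed) of a stream-configuration. -/
def write : Cfg → ℕ → ℕ → Cfg
  | σ, 0, _ => σ
  | σ, 1, v => Stream'.cons v σ.tail
  | σ, (i+2), v => Stream'.cons σ.head (write σ.tail (i+1) v)

/-- Zeroing function `zr`: `0 → R_i`. -/
def zr (σ : Cfg) (i : ℕ) : Cfg := write σ i 0

/-- Successor function `sc`: `r_i + 1 → R_i`. -/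
def sc (σ : Cfg) (i : ℕ) : Cfg := write σ i (reg σ i + 1)

/-- Transfer function `mv`: `r_i → R_j`. -/
def mv (σ : Cfg) (i j : ℕ) : Cfg := write σ j (reg σ i)

/-- Inductive big-step convergence predicate `cp_+` on infinite configurations. -/
inductive cpPlus (U : Pgm) : Cfg → ℕ → Cfg → Prop where
  | jf_l {σ h i j k} : inst U h = some (.J i j k) → h = U.length →
      reg σ i ≠ reg σ j → cpPlus U σ h σ
  | jf_r {σ τ h i j k} : inst U h = some (.J i j k) → h < U.length →
      reg σ i ≠ reg σ j → cpPlus U σ (h+1) τ → cpPlus U σ h τ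
  | jt_l {σ h i j k} : inst U h = some (.J i j k) → k = 0 →
      reg σ i = reg σ j → cpPlus U σ h σ
  | jt_r {σ τ h i j k} : inst U h = some (.J i j k) → k ≠ 0 →
      reg σ i = reg σ j → cpPlus U σ k τ → cpPlus U σ h τ
  | z_l {σ τ h i} : inst U h = some (.Z i) → h = U.length →
      τ = zr σ i → cpPlus U σ h τ
  | z_r {σ τ h i} : inst U h = some (.Z i) → h < U.length →
      cpPlus U (zr σ i) (h+1) τ → cpPlus U σ h τ
  | s_l {σ τ h i} : inst U h = some (.S i) → h = U.length →
      τ = sc σ i → cpPlus U σ h τ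
  | s_r {σ τ h i} : inst U h = some (.S i) → h < U.length →
      cpPlus U (sc σ i) (h+1) τ → cpPlus U σ h τ
  | t_l {σ τ h i j} : inst U h = some (.T i j) → h = U.length →
      τ = mv σ i j → cpPlus U σ h τ
  | t_r {σ τ h i j} : inst U h = some (.T i j) → h < U.length →
      cpPlus U (mv σ i j) (h+1) τ → cpPlus U σ h τ

/-- One unfolding of the coinductive divergence rules for the full URM. -/
def cpInfStep (U : Pgm) (R : Cfg → ℕ → Prop) (σ : Cfg) (h : ℕ) : Prop :=
  (∃ i j k, inst U h = some (.J i j k) ∧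
     ((h < U.length ∧ reg σ i ≠ reg σ j ∧ R σ (h+1)) ∨
      (k ≠ 0 ∧ reg σ i = reg σ j ∧ R σ k))) ∨
  (∃ i, inst U h = some (.Z i) ∧ h < U.length ∧ R (zr σ i) (h+1)) ∨
  (∃ i, inst U h = some (.S i) ∧ h < U.length ∧ R (sc σ i) (h+1)) ∨
  (∃ i j, inst U h = some (.T i j) ∧ h < U.length ∧ R (mv σ i j) (h+1))

/-- Coinductive divergence predicate `cp_∞` on infinite configurations
(greatest fixpoint of the rules). -/
def cpInf (U : Pgm) (σ : Cfg) (h : ℕ) : Prop :=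
  ∃ R : Cfg → ℕ → Prop, R σ h ∧ ∀ σ' h', R σ' h' → cpInfStep U R σ' h'


/-- Zeroing on finite configurations. -/
def zrL (σ : FCfg) (i : ℕ) : FCfg := σ.set (i - 1) 0

/-- Successor on finite configurations. -/
def scL (σ : FCfg) (i : ℕ) : FCfg := σ.set (i - 1) (areg σ i + 1)

/-- Transfer on finite configurations. -/
def mvL (σ : FCfg) (i j : ℕ) : FCfg := σ.set (j - 1) (areg σ i)

/-- Inductive convergence predicate `cp_+` on finite configurations. -/
inductive cpPlusL (U : Pgm) : FCfg → ℕ → FCfg → Prop where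
  | jf_l {σ h i j k} : inst U h = some (.J i j k) → h = U.length →
      areg σ i ≠ areg σ j → cpPlusL U σ h σ
  | jf_r {σ τ h i j k} : inst U h = some (.J i j k) → h < U.length →
      areg σ i ≠ areg σ j → cpPlusL U σ (h+1) τ → cpPlusL U σ h τ
  | jt_l {σ h i j k} : inst U h = some (.J i j k) → k = 0 →
      areg σ i = areg σ j → cpPlusL U σ h σ
  | jt_r {σ τ h i j k} : inst U h = some (.J i j k) → k ≠ 0 →
      areg σ i = areg σ j → cpPlusL U σ k τ → cpPlusL U σ h τ
  | z_l {σ τ h i} : inst U h = some (.Z i) → h = U.length →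
      τ = zrL σ i → cpPlusL U σ h τ
  | z_r {σ τ h i} : inst U h = some (.Z i) → h < U.length →
      cpPlusL U (zrL σ i) (h+1) τ → cpPlusL U σ h τ
  | s_l {σ τ h i} : inst U h = some (.S i) → h = U.length →
      τ = scL σ i → cpPlusL U σ h τ
  | s_r {σ τ h i} : inst U h = some (.S i) → h < U.length →
      cpPlusL U (scL σ i) (h+1) τ → cpPlusL U σ h τ
  | t_l {σ τ h i j} : inst U h = some (.T i j) → h = U.length →
      τ = mvL σ i j → cpPlusL U σ h τ
  | t_r {σ τ h i j} : inst U h = some (.T i j) → h < U.length →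
      cpPlusL U (mvL σ i j) (h+1) τ → cpPlusL U σ h τ

/-- One unfolding of the coinductive divergence rules, finite configurations. -/
def cpInfStepL (U : Pgm) (R : FCfg → ℕ → Prop) (σ : FCfg) (h : ℕ) : Prop :=
  (∃ i j k, inst U h = some (.J i j k) ∧
     ((h < U.length ∧ areg σ i ≠ areg σ j ∧ R σ (h+1)) ∨
      (k ≠ 0 ∧ areg σ i = areg σ j ∧ R σ k))) ∨
  (∃ i, inst U h = some (.Z i) ∧ h < U.length ∧ R (zrL σ i) (h+1)) ∨
  (∃ i, inst U h = some (.S i) ∧ h < U.length ∧ R (scL σ i) (h+1)) ∨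
  (∃ i j, inst U h = some (.T i j) ∧ h < U.length ∧ R (mvL σ i j) (h+1))

/-- Coinductive divergence predicate `cp_∞` on finite configurations. -/
def cpInfL (U : Pgm) (σ : FCfg) (h : ℕ) : Prop :=
  ∃ R : FCfg → ℕ → Prop, R σ h ∧ ∀ σ' h', R σ' h' → cpInfStepL U R σ' h'

/-- An instruction references only registers in `[1..m]` and jump targets `≤ n`. -/
def instOK (m n : ℕ) : Inst → Prop
  | .Z i => 1 ≤ i ∧ i ≤ m
  | .S i => 1 ≤ i ∧ i ≤ m
  | .T i j => 1 ≤ i ∧ i ≤ m ∧ 1 ≤ j ∧ j ≤ m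
  | .J i j k => 1 ≤ i ∧ i ≤ m ∧ 1 ≤ j ∧ j ≤ m ∧ k ≤ n

/-- Standard form: every jump target is `≤ n`. -/
def StandardForm (U : Pgm) : Prop :=
  ∀ I ∈ U, ∀ i j k, I = Inst.J i j k → k ≤ U.length

/-- Compatibility `σ ⊨ U` of a finite configuration with a program. -/
def Compatible (σ : FCfg) (U : Pgm) : Prop :=
  StandardForm U ∧ ∀ I ∈ U, instOK σ.length U.length I

/-- Inclusion `σ ⊂ τ∞` of a finite configuration in an infinite one. -/
def Incl (σ : FCfg) (τ : Cfg) : Prop :=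
  (∀ ι, 1 ≤ ι → ι ≤ σ.length → reg τ ι = areg σ ι) ∧
  (∀ ι, σ.length < ι → reg τ ι = 0)

/-- Maximal register index referenced by an instruction. -/
def maxReg : Inst → ℕ
  | .Z i => i
  | .S i => i
  | .T i j => max i j
  | .J i j _ => max i j

/-- `ρ(U)`: maximal register index affected by the program `U`. -/
def rho (U : Pgm) : ℕ := (U.map maxReg).foldr max 0

/-- Restriction `σ∞|U` of an infinite configuration to the first `ρ(U)` registers. -/
def restrict (σ : Cfg) (U : Pgm) : FCfg := Stream'.take (rho U) σ

section Aux

lemma write_get (v : ℕ) : ∀ (i : ℕ) (σ : Cfg) (n : ℕ),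
    (write σ (i+1) v).get n = if n = i then v else σ.get n := by
  intro i
  induction i with
  | zero =>
    intro σ n
    cases n with
    | zero => simp [write]
    | succ n => simp [write, Stream'.get, Stream'.cons, Stream'.tail]
  | succ i ih =>
    intro σ n
    cases n with
    | zero => simp [write, Stream'.get, Stream'.cons, Stream'.head]
    | succ n =>
      have heq : (write σ (i+2) v).get (n+1) = (write σ.tail (i+1) v).get n := by
        simp [write, Stream'.get, Stream'.cons]
      rw [heq, ih]
      by_cases hn : n = i
      · simp [hn]
      · simp [hn, fun h => hn (Nat.succ_injective h), Stream'.get, Stream'.tail]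

lemma reg_write {i : ℕ} (hi : 1 ≤ i) (σ : Cfg) (v : ℕ) {j : ℕ} (hj : 1 ≤ j) :
    reg (write σ i v) j = if j = i then v else reg σ j := by
  obtain ⟨i', rfl⟩ : ∃ i', i = i' + 1 := ⟨i - 1, by omega⟩
  unfold reg
  rw [write_get]
  have key : (j - 1 = i') ↔ (j = i' + 1) := by omega
  by_cases hj' : j = i' + 1
  · simp [hj', key.2 hj']
  · simp [hj', (not_congr key).2 hj']

lemma Incl_iff (σ : FCfg) (a : Cfg) :
    Incl σ a ↔ ∀ ι, 1 ≤ ι → reg a ι = areg σ ι := by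
  constructor
  · rintro ⟨h1, h2⟩ ι hι
    by_cases hle : ι ≤ σ.length
    · exact h1 ι hι hle
    · rw [h2 ι (by omega)]
      unfold areg
      rw [List.getD_eq_default]
      omega
  · intro hp
    refine ⟨fun ι hι _ => hp ι hι, fun ι hι => ?_⟩
    rw [hp ι (by omega)]
    unfold areg
    rw [List.getD_eq_default]
    omega

lemma Incl_unique {σ : FCfg} {a b : Cfg} (ha : Incl σ a) (hb : Incl σ b) : a = b := by
  rw [Incl_iff] at ha hb
  apply Stream'.ext
  intro n
  have h1 := ha (n+1) (by omega)
  have h2 := hb (n+1) (by omega)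
  simpa [reg] using h1.trans h2.symm

lemma areg_set {σ : FCfg} {i : ℕ} (hi : 1 ≤ i) (hile : i ≤ σ.length) (v : ℕ)
    {j : ℕ} (hj : 1 ≤ j) :
    areg (σ.set (i-1) v) j = if j = i then v else areg σ j := by
  unfold areg
  by_cases hij : j = i
  · subst hij
    simp [List.getD, List.getElem?_set_self (by omega : j - 1 < σ.length)]
  · have hne : i - 1 ≠ j - 1 := by omega
    simp [List.getD, List.getElem?_set_ne hne, hij]

lemma Incl_set {σ : FCfg} {a : Cfg} (h : Incl σ a) {i : ℕ} (hi : 1 ≤ i)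
    (hile : i ≤ σ.length) (v : ℕ) : Incl (σ.set (i-1) v) (write a i v) := by
  rw [Incl_iff] at h ⊢
  intro ι hι
  rw [reg_write hi a v hι, areg_set hi hile v hι]
  by_cases hij : ι = i
  · simp [hij]
  · simp [hij, h ι hι]

lemma mem_of_inst {U : Pgm} {h : ℕ} {I : Inst} (hI : inst U h = some I) : I ∈ U := by
  unfold inst at hI
  exact List.mem_of_getElem? hI

end Aux

/-- if `cp_+(U, σ, h, τ)` holds for finite configurations, `σ` is
compatible with `U`, `σ ⊂ σ∞` and `τ ⊂ τ∞`, then `cp_+(U, σ∞, h, τ∞)` holds. -/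
theorem cpPlus_of_finite (U : Pgm) (σ τ : FCfg) (h : ℕ) (σinf τinf : Cfg)
    (heval : cpPlusL U σ h τ) (hcomp : Compatible σ U)
    (hσ : Incl σ σinf) (hτ : Incl τ τinf) :
    cpPlus U σinf h τinf := by
  revert hcomp σinf τinf hσ hτ
  induction heval with
  | @jf_l σ h i j k hI hlen hne =>
    intro σinf τinf hcomp hσ hτ
    obtain ⟨hi1, hi2, hj1, hj2, -⟩ :
        1 ≤ i ∧ i ≤ σ.length ∧ 1 ≤ j ∧ j ≤ σ.length ∧ k ≤ U.length :=
      hcomp.2 _ (mem_of_inst hI)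
    rw [Incl_unique hτ hσ]
    exact cpPlus.jf_l hI hlen (by
      rw [(Incl_iff _ _).1 hσ i hi1, (Incl_iff _ _).1 hσ j hj1]; exact hne)
  | @jf_r σ τ h i j k hI hlen hne _ ih =>
    intro σinf τinf hcomp hσ hτ
    obtain ⟨hi1, hi2, hj1, hj2, -⟩ :
        1 ≤ i ∧ i ≤ σ.length ∧ 1 ≤ j ∧ j ≤ σ.length ∧ k ≤ U.length :=
      hcomp.2 _ (mem_of_inst hI)
    exact cpPlus.jf_r hI hlen (by
      rw [(Incl_iff _ _).1 hσ i hi1, (Incl_iff _ _).1 hσ j hj1]; exact hne)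
      (ih σinf τinf hcomp hσ hτ)
  | @jt_l σ h i j k hI hk heq =>
    intro σinf τinf hcomp hσ hτ
    obtain ⟨hi1, hi2, hj1, hj2, -⟩ :
        1 ≤ i ∧ i ≤ σ.length ∧ 1 ≤ j ∧ j ≤ σ.length ∧ k ≤ U.length :=
      hcomp.2 _ (mem_of_inst hI)
    rw [Incl_unique hτ hσ]
    exact cpPlus.jt_l hI hk (by
      rw [(Incl_iff _ _).1 hσ i hi1, (Incl_iff _ _).1 hσ j hj1]; exact heq)
  | @jt_r σ τ h i j k hI hk heq _ ih =>
    intro σinf τinf hcomp hσ hτ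
    obtain ⟨hi1, hi2, hj1, hj2, -⟩ :
        1 ≤ i ∧ i ≤ σ.length ∧ 1 ≤ j ∧ j ≤ σ.length ∧ k ≤ U.length :=
      hcomp.2 _ (mem_of_inst hI)
    exact cpPlus.jt_r hI hk (by
      rw [(Incl_iff _ _).1 hσ i hi1, (Incl_iff _ _).1 hσ j hj1]; exact heq)
      (ih σinf τinf hcomp hσ hτ)
  | @z_l σ τ h i hI hlen hτeq =>
    intro σinf τinf hcomp hσ hτ
    obtain ⟨hi1, hi2⟩ : 1 ≤ i ∧ i ≤ σ.length := hcomp.2 _ (mem_of_inst hI)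
    subst hτeq
    have hz : Incl (zrL σ i) (zr σinf i) := Incl_set hσ hi1 hi2 0
    rw [Incl_unique hτ hz]
    exact cpPlus.z_l hI hlen rfl
  | @z_r σ τ h i hI hlen _ ih =>
    intro σinf τinf hcomp hσ hτ
    obtain ⟨hi1, hi2⟩ : 1 ≤ i ∧ i ≤ σ.length := hcomp.2 _ (mem_of_inst hI)
    have hz : Incl (zrL σ i) (zr σinf i) := Incl_set hσ hi1 hi2 0
    have hcomp' : Compatible (zrL σ i) U := by
      refine ⟨hcomp.1, fun I hI' => ?_⟩
      have := hcomp.2 I hI'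
      simpa [zrL, List.length_set] using this
    exact cpPlus.z_r hI hlen (ih (zr σinf i) τinf hcomp' hz hτ)
  | @s_l σ τ h i hI hlen hτeq =>
    intro σinf τinf hcomp hσ hτ
    obtain ⟨hi1, hi2⟩ : 1 ≤ i ∧ i ≤ σ.length := hcomp.2 _ (mem_of_inst hI)
    subst hτeq
    have hs : Incl (scL σ i) (sc σinf i) := by
      have h' := Incl_set hσ hi1 hi2 (areg σ i + 1)
      simpa [scL, sc, (Incl_iff _ _).1 hσ i hi1] using h'
    rw [Incl_unique hτ hs]
    exact cpPlus.s_l hI hlen rfl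
  | @s_r σ τ h i hI hlen _ ih =>
    intro σinf τinf hcomp hσ hτ
    obtain ⟨hi1, hi2⟩ : 1 ≤ i ∧ i ≤ σ.length := hcomp.2 _ (mem_of_inst hI)
    have hs : Incl (scL σ i) (sc σinf i) := by
      have h' := Incl_set hσ hi1 hi2 (areg σ i + 1)
      simpa [scL, sc, (Incl_iff _ _).1 hσ i hi1] using h'
    have hcomp' : Compatible (scL σ i) U := by
      refine ⟨hcomp.1, fun I hI' => ?_⟩
      have := hcomp.2 I hI'
      simpa [scL, List.length_set] using this
    exact cpPlus.s_r hI hlen (ih (sc σinf i) τinf hcomp' hs hτ)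
  | @t_l σ τ h i j hI hlen hτeq =>
    intro σinf τinf hcomp hσ hτ
    obtain ⟨hi1, hi2, hj1, hj2⟩ :
        1 ≤ i ∧ i ≤ σ.length ∧ 1 ≤ j ∧ j ≤ σ.length := hcomp.2 _ (mem_of_inst hI)
    subst hτeq
    have hm : Incl (mvL σ i j) (mv σinf i j) := by
      have h' := Incl_set hσ hj1 hj2 (areg σ i)
      simpa [mvL, mv, (Incl_iff _ _).1 hσ i hi1] using h'
    rw [Incl_unique hτ hm]
    exact cpPlus.t_l hI hlen rfl
  | @t_r σ τ h i j hI hlen _ ih =>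
    intro σinf τinf hcomp hσ hτ
    obtain ⟨hi1, hi2, hj1, hj2⟩ :
        1 ≤ i ∧ i ≤ σ.length ∧ 1 ≤ j ∧ j ≤ σ.length := hcomp.2 _ (mem_of_inst hI)
    have hm : Incl (mvL σ i j) (mv σinf i j) := by
      have h' := Incl_set hσ hj1 hj2 (areg σ i)
      simpa [mvL, mv, (Incl_iff _ _).1 hσ i hi1] using h'
    have hcomp' : Compatible (mvL σ i j) U := by
      refine ⟨hcomp.1, fun I hI' => ?_⟩
      have := hcomp.2 I hI'
      simpa [mvL, List.length_set] using this
    exact cpPlus.t_r hI hlen (ih (mv σinf i j) τinf hcomp' hm hτ)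
end

section
/- For the full URM evaluation on infinite configurations: for any program U, configuration σ∞, and valid program counter h, it is not the case that both cp_+(U, σ∞, h, τ∞) for some τ∞ and cp_∞(U, σ∞, h) hold (convergence and divergence are mutually exclusive). -/
theorem cpPlus_not_cpInf {U : Pgm} {σ : Cfg} {h : ℕ} {τ : Cfg}
    (hp : cpPlus U σ h τ) : ¬ cpInf U σ h := by
  induction hp with
  | jf_l hins heq hne =>
      rintro ⟨R, hR, hstep⟩
      rcases hstep _ _ hR with ⟨i', j', k', hins', hc⟩ | ⟨i', hins', _⟩ |
        ⟨i', hins', _⟩ | ⟨i', j', hins', _⟩ <;> rw [hins] at hins' <;>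
        cases hins'
      rcases hc with ⟨hl, _⟩ | ⟨_, heqr, _⟩
      · omega
      · exact hne heqr
  | jf_r hins hlt hne _ ih =>
      rintro ⟨R, hR, hstep⟩
      rcases hstep _ _ hR with ⟨i', j', k', hins', hc⟩ | ⟨i', hins', _⟩ |
        ⟨i', hins', _⟩ | ⟨i', j', hins', _⟩ <;> rw [hins] at hins' <;>
        cases hins'
      rcases hc with ⟨_, _, hRn⟩ | ⟨_, heqr, _⟩
      · exact ih ⟨R, hRn, hstep⟩
      · exact hne heqr
  | jt_l hins hk heqr =>
      rintro ⟨R, hR, hstep⟩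
      rcases hstep _ _ hR with ⟨i', j', k', hins', hc⟩ | ⟨i', hins', _⟩ |
        ⟨i', hins', _⟩ | ⟨i', j', hins', _⟩ <;> rw [hins] at hins' <;>
        cases hins'
      rcases hc with ⟨_, hne, _⟩ | ⟨hk', _, _⟩
      · exact hne heqr
      · exact hk' hk
  | jt_r hins hk heqr _ ih =>
      rintro ⟨R, hR, hstep⟩
      rcases hstep _ _ hR with ⟨i', j', k', hins', hc⟩ | ⟨i', hins', _⟩ |
        ⟨i', hins', _⟩ | ⟨i', j', hins', _⟩ <;> rw [hins] at hins' <;>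
        cases hins'
      rcases hc with ⟨_, hne, _⟩ | ⟨_, _, hRn⟩
      · exact hne heqr
      · exact ih ⟨R, hRn, hstep⟩
  | z_l hins heq _ =>
      rintro ⟨R, hR, hstep⟩
      rcases hstep _ _ hR with ⟨i', j', k', hins', _⟩ | ⟨i', hins', hlt, _⟩ |
        ⟨i', hins', _⟩ | ⟨i', j', hins', _⟩ <;> rw [hins] at hins' <;>
        cases hins'
      omega
  | z_r hins hlt _ ih =>
      rintro ⟨R, hR, hstep⟩
      rcases hstep _ _ hR with ⟨i', j', k', hins', _⟩ | ⟨i', hins', _, hRn⟩ |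
        ⟨i', hins', _⟩ | ⟨i', j', hins', _⟩ <;> rw [hins] at hins' <;>
        cases hins'
      exact ih ⟨R, hRn, hstep⟩
  | s_l hins heq _ =>
      rintro ⟨R, hR, hstep⟩
      rcases hstep _ _ hR with ⟨i', j', k', hins', _⟩ | ⟨i', hins', _⟩ |
        ⟨i', hins', hlt, _⟩ | ⟨i', j', hins', _⟩ <;> rw [hins] at hins' <;>
        cases hins'
      omega
  | s_r hins hlt _ ih =>
      rintro ⟨R, hR, hstep⟩
      rcases hstep _ _ hR with ⟨i', j', k', hins', _⟩ | ⟨i', hins', _⟩ |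
        ⟨i', hins', _, hRn⟩ | ⟨i', j', hins', _⟩ <;> rw [hins] at hins' <;>
        cases hins'
      exact ih ⟨R, hRn, hstep⟩
  | t_l hins heq _ =>
      rintro ⟨R, hR, hstep⟩
      rcases hstep _ _ hR with ⟨i', j', k', hins', _⟩ | ⟨i', hins', _⟩ |
        ⟨i', hins', _⟩ | ⟨i', j', hins', hlt, _⟩ <;> rw [hins] at hins' <;>
        cases hins'
      omega
  | t_r hins hlt _ ih =>
      rintro ⟨R, hR, hstep⟩
      rcases hstep _ _ hR with ⟨i', j', k', hins', _⟩ | ⟨i', hins', _⟩ |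
        ⟨i', hins', _⟩ | ⟨i', j', hins', _, hRn⟩ <;> rw [hins] at hins' <;>
        cases hins'
      exact ih ⟨R, hRn, hstep⟩

/-- for the full URM on infinite configurations, convergence and
divergence are mutually exclusive: it is not the case that both `cp_+(U, σ∞, h, τ∞)`
for some `τ∞` and `cp_∞(U, σ∞, h)` hold. -/
theorem cp_not_both (U : Pgm) (σinf : Cfg) (h : ℕ)
    (h1 : 1 ≤ h) (h2 : h ≤ U.length) :
    ¬ ((∃ τinf : Cfg, cpPlus U σinf h τinf) ∧ cpInf U σinf h) := by
  rintro ⟨⟨τ, hp⟩, hinf⟩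
  exact cpPlus_not_cpInf hp hinf
end
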